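/- Let σ, β, κ > 0 and a, b, v ∈ ℝ with v ≥ 0. Define f(u) = βu + (1/(2σ))max(a − σu, 0)² + (1/(2σ))max(b − σu, 0)² + (κ/2)(u − v)², and let u* be the minimizer of f over u ≥ 0. If |a| + |b| ≤ β, then the descent amount Δu = v − u* satisfies min(v, (β − (|a| + |b|))/κ) ≤ Δu ≤ min(v, β/κ). -/

import Mathlib

/-!
Write `f = φ + (κ/2)(· - v)²` with `φ u = βu + (1/(2σ))(a - σu)₊² + (1/(2σ))(b - σu)₊²`.
On `u ≥ 0` every difference quotient of `φ` lies in `[β - (|a| + |b|), β]`: the two penalty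
terms are nonincreasing, and by convexity each drops at rate at most `(a - σu)₊ ≤ |a|`.
Comparing `f` at the minimizer with `f` at `v - β/κ`, resp. at `max 0 (v - (β - |a| - |b|)/κ)`,
then shows that the proximal step `v - u*` is at least the lower and at most the upper slope
divided by `κ`, and at most `v` since `u* ≥ 0`.
-/

open Set

theorem sq_max_zero_sub_sq_max_zero_le (x y : ℝ) :
    max x 0 ^ 2 - max y 0 ^ 2 ≤ 2 * max x 0 * (x - y) := by
  rcases le_total x 0 with hx | hx
  · rw [max_eq_right hx]
    nlinarith
  · rw [max_eq_left hx]
    nlinarith [mul_le_mul_of_nonneg_left (le_max_left y 0) hx, sq_nonneg (x - max y 0)]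

section Penalty

variable {σ : ℝ} (a : ℝ)

theorem antitone_penalty (hσ : 0 ≤ σ) :
    Antitone fun u => 1 / (2 * σ) * max (a - σ * u) 0 ^ 2 := by
  intro x y hxy
  dsimp only
  gcongr

theorem monotoneOn_penalty_add_abs_mul (hσ : 0 < σ) :
    MonotoneOn (fun u => 1 / (2 * σ) * max (a - σ * u) 0 ^ 2 + |a| * u) (Ici 0) := by
  intro x hx y _ hxy
  have hmax : max (a - σ * x) 0 ≤ |a| :=
    max_le (by nlinarith [le_abs_self a, mul_nonneg hσ.le (mem_Ici.1 hx)]) (abs_nonneg a)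
  have hconv := sq_max_zero_sub_sq_max_zero_le (a - σ * x) (a - σ * y)
  have hdrop : 1 / (2 * σ) * max (a - σ * x) 0 ^ 2 - 1 / (2 * σ) * max (a - σ * y) 0 ^ 2
      ≤ max (a - σ * x) 0 * (y - x) := by
    rw [← mul_sub, div_mul_eq_mul_div, one_mul, div_le_iff₀ (by positivity)]
    linarith
  nlinarith [mul_le_mul_of_nonneg_right hmax (sub_nonneg.2 hxy)]

end Penalty

section ProximalStep

variable {φ : ℝ → ℝ} {κ v u : ℝ}

theorem le_of_isMinOn_add_sq_of_monotoneOn {m t : ℝ} (hκ : 0 < κ)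
    (hφ : MonotoneOn (fun x => φ x - m * x) (Ici 0))
    (hu : IsMinOn (fun x => φ x + κ / 2 * (x - v) ^ 2) (Ici 0) u)
    (ht : 0 ≤ t) (htv : v - m / κ ≤ t) : u ≤ t := by
  by_contra! htu
  have hmin := isMinOn_iff.1 hu t ht
  have hslope := hφ (mem_Ici.2 ht) (mem_Ici.2 (ht.trans htu.le)) htu.le
  have hκm : κ * (m / κ) = m := mul_div_cancel₀ m hκ.ne'
  have hgap : 0 < (u - t) * (κ * (u + t - 2 * v) + 2 * m) := by
    apply mul_pos (sub_pos.2 htu)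
    nlinarith [mul_le_mul_of_nonneg_left htv hκ.le]
  simp only at hmin hslope
  nlinarith

theorem sub_div_le_of_isMinOn_add_sq_of_antitoneOn {M : ℝ} (hκ : 0 < κ)
    (hφ : AntitoneOn (fun x => φ x - M * x) (Ici 0))
    (hu : IsMinOn (fun x => φ x + κ / 2 * (x - v) ^ 2) (Ici 0) u)
    (hu₀ : 0 ≤ u) : v - M / κ ≤ u := by
  by_contra! hut
  have ht : 0 ≤ v - M / κ := hu₀.trans hut.le
  have hmin := isMinOn_iff.1 hu _ ht
  have hslope := hφ (mem_Ici.2 hu₀) (mem_Ici.2 ht) hut.le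
  have hκM : κ * (M / κ) = M := mul_div_cancel₀ M hκ.ne'
  have hgap : 0 < (v - M / κ - u) * (-2 * M - κ * (u - M / κ - v)) := by
    apply mul_pos (sub_pos.2 hut)
    nlinarith
  simp only at hmin hslope
  nlinarith

end ProximalStep

theorem stmt_0_general (σ β κ : ℝ) (hσ : 0 < σ) (hκ : 0 < κ)
    (a b v : ℝ)
    (f : ℝ → ℝ)
    (hf : ∀ u, f u = β * u + (1 / (2 * σ)) * max (a - σ * u) 0 ^ 2
      + (1 / (2 * σ)) * max (b - σ * u) 0 ^ 2 + (κ / 2) * (u - v) ^ 2)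
    (ustar : ℝ) (hustar : 0 ≤ ustar)
    (hmin : ∀ u, 0 ≤ u → f ustar ≤ f u) :
    min v ((β - (|a| + |b|)) / κ) ≤ v - ustar ∧ v - ustar ≤ min v (β / κ) := by
  set φ : ℝ → ℝ := fun u => β * u + (1 / (2 * σ)) * max (a - σ * u) 0 ^ 2
    + (1 / (2 * σ)) * max (b - σ * u) 0 ^ 2
  have hf' : f = fun u => φ u + κ / 2 * (u - v) ^ 2 := funext hf
  have hu : IsMinOn (fun u => φ u + κ / 2 * (u - v) ^ 2) (Ici 0) ustar :=
    hf' ▸ isMinOn_iff.2 hmin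
  have hlower : MonotoneOn (fun u => φ u - (β - (|a| + |b|)) * u) (Ici 0) :=
    ((monotoneOn_penalty_add_abs_mul a hσ).add (monotoneOn_penalty_add_abs_mul b hσ)).congr
      fun u _ => by ring
  have hupper : AntitoneOn (fun u => φ u - β * u) (Ici 0) :=
    ((antitone_penalty a hσ.le).add (antitone_penalty b hσ.le)).antitoneOn _ |>.congr
      fun u _ => by ring
  have hle := le_of_isMinOn_add_sq_of_monotoneOn hκ hlower hu (le_max_left 0 _) (le_max_right _ _)
  have hge := sub_div_le_of_isMinOn_add_sq_of_antitoneOn hκ hupper hu hustar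
  refine ⟨?_, le_min (by linarith) (by linarith)⟩
  rcases le_max_iff.1 hle with h | h
  · exact min_le_of_left_le (by linarith)
  · exact min_le_of_right_le (by linarith)

theorem stmt_0 (σ β κ : ℝ) (hσ : 0 < σ) (hβ : 0 < β) (hκ : 0 < κ)
    (a b v : ℝ) (hv : 0 ≤ v)
    (f : ℝ → ℝ)
    (hf : ∀ u, f u = β * u + (1 / (2 * σ)) * max (a - σ * u) 0 ^ 2
      + (1 / (2 * σ)) * max (b - σ * u) 0 ^ 2 + (κ / 2) * (u - v) ^ 2)
    (ustar : ℝ) (hustar : 0 ≤ ustar)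
    (hmin : ∀ u, 0 ≤ u → f ustar ≤ f u)
    (hstab : |a| + |b| ≤ β) :
    min v ((β - (|a| + |b|)) / κ) ≤ v - ustar ∧ v - ustar ≤ min v (β / κ) :=
  stmt_0_general σ β κ hσ hκ a b v f hf ustar hustar hmin
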